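/- arXiv:math/0309396 — 3 statements merged into one kernel-verified Lean document; each statement's English description precedes it below -/
import Mathlib

section
/- Let G be a group, N a normal subgroup, π : N → U(H) a unitary representation, V : G → U(H) a map with V_s π(n) V_s* = π(s n s⁻¹) and V_{sn} = V_s π(n) for all s ∈ G, n ∈ N. Let σ(s,t) = V_s V_t V_{st}* and α_s = Ad V_s. Suppose ν : G/N → U(H) takes values in π(N)' and satisfies ν(sN) α_s(ν(tN)) σ(s,t) ν(stN)* = 1 for all s, t ∈ G. Then ρ(s) := ν(sN) V_s defines a group homomorphism ρ : G → U(H) extending π (i.e., ρ(n) = π(n) for n ∈ N). -/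
/-- Read with `a = ν(sN)`, `v = V_s`, `b = ν(tN)`, `w = V_t`, `u = V_{st}`, `c = ν(stN)`:
the trivialization `ν(sN) α_s(ν(tN)) σ(s,t) ν(stN)⁻¹ = 1` says `ρ(st) = ρ(s) ρ(t)`. -/
theorem mul_mul_eq_of_mul_conj_mul_mul_inv_eq_one {M : Type*} [Group M] {a v b w u c : M}
    (h : a * (v * b * v⁻¹) * (v * w * u⁻¹) * c⁻¹ = 1) : c * u = a * v * (b * w) := by
  rw [mul_eq_one_iff_eq_inv, inv_inv] at h
  rw [← h]
  group

theorem stmt6_general {G : Type*} [Group G] (N : Subgroup G) (hN : N.Normal)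
    {H : Type*} [NormedAddCommGroup H] [InnerProductSpace ℂ H] [CompleteSpace H]
    (π : N →* unitary (H →L[ℂ] H)) (V : G → unitary (H →L[ℂ] H))
    (hVn : ∀ (s : G) (n : N), V (s * (n : G)) = V s * π n)
    (hVe : V 1 = 1)
    (ν : G ⧸ N → unitary (H →L[ℂ] H)) (hνe : ν 1 = 1)
    (htriv : ∀ s t : G,
      ν (QuotientGroup.mk s) * (V s * ν (QuotientGroup.mk t) * (V s)⁻¹)
        * (V s * V t * (V (s * t))⁻¹) * (ν (QuotientGroup.mk (s * t)))⁻¹ = 1) :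
    ∀ ρ : G → unitary (H →L[ℂ] H),
      (ρ = fun s => ν (QuotientGroup.mk s) * V s) →
      (∀ s t : G, ρ (s * t) = ρ s * ρ t) ∧ (∀ n : N, ρ (n : G) = π n) := by
  rintro ρ rfl
  refine ⟨fun s t => mul_mul_eq_of_mul_conj_mul_mul_inv_eq_one (htriv s t), fun n => ?_⟩
  have hνn : ν (n : G) = 1 := by rw [(QuotientGroup.eq_one_iff _).mpr n.2, hνe]
  have hVπ : V n = π n := by simpa [hVe] using hVn 1 n
  change ν _ * V _ = _
  rw [hνn, hVπ, one_mul]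

/-- If the twisted action `(α, σ)` is trivialized by a Borel map `ν` with values in the
commutant, then `ρ(s) = ν(sN) V_s` is a unitary representation of `G` extending `π`. -/
theorem stmt6 {G : Type*} [Group G] (N : Subgroup G) (hN : N.Normal)
    {H : Type*} [NormedAddCommGroup H] [InnerProductSpace ℂ H] [CompleteSpace H]
    (π : N →* unitary (H →L[ℂ] H)) (V : G → unitary (H →L[ℂ] H))
    (hV : ∀ (s : G) (n : N),
      (V s : H →L[ℂ] H) * (π n : H →L[ℂ] H) * star (V s : H →L[ℂ] H)
        = (π ⟨s * n * s⁻¹, hN.conj_mem (n : G) n.2 s⟩ : H →L[ℂ] H))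
    (hVn : ∀ (s : G) (n : N), V (s * (n : G)) = V s * π n)
    (hVe : V 1 = 1)
    (ν : G ⧸ N → unitary (H →L[ℂ] H)) (hνe : ν 1 = 1)
    (hνcomm : ∀ (x : G ⧸ N) (n : N),
      (ν x : H →L[ℂ] H) * (π n : H →L[ℂ] H) = (π n : H →L[ℂ] H) * (ν x : H →L[ℂ] H))
    (htriv : ∀ s t : G,
      ν (QuotientGroup.mk s) * (V s * ν (QuotientGroup.mk t) * (V s)⁻¹)
        * (V s * V t * (V (s * t))⁻¹) * (ν (QuotientGroup.mk (s * t)))⁻¹ = 1) :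
    ∀ ρ : G → unitary (H →L[ℂ] H),
      (ρ = fun s => ν (QuotientGroup.mk s) * V s) →
      (∀ s t : G, ρ (s * t) = ρ s * ρ t) ∧ (∀ n : N, ρ (n : G) = π n) :=
  stmt6_general N hN π V hVn hVe ν hνe htriv
end

section
/- Let G be a group, N a normal subgroup, π : N → U(H) a unitary representation that extends to a homomorphism ρ : G → U(H) with ρ|_N = π. Let V : G → U(H) satisfy V_s π(n) V_s* = π(s n s⁻¹), V_{sn} = V_s π(n), V_e = 1, and set σ(s,t) = V_s V_t V_{st}*, α_s = Ad V_s. Define ν_s = ρ(s) V_s*. Then ν_s depends only on the coset sN, takes values in the unitary group of the commutant π(N)', and satisfies ν_s α_s(ν_t) σ(s,t) ν_{st}* = 1 for all s, t ∈ G. -/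
/-!
Writing `ν s = ρ s * (V s)⁻¹`, coset invariance is `V (s n) = V s π n = V s ρ n`, and the
cocycle identity is a formal computation in the unitary group, since `α_s` is conjugation by `V s`.
For the commutant, `ρ s` and `V s` both conjugate `π n` to `π (s n s⁻¹)`, hence their quotient
`ν s` commutes with `π (s n s⁻¹)`, and every element of `N` has this form.
-/

section GroupIdentities

variable {G K : Type*} [Group G] [Group K]

theorem mul_inv_map_mul_right_of_extends {N : Subgroup G} (π : N →* K) (ρ : G →* K)
    (hext : ∀ n : N, ρ n = π n) (V : G → K) (hVn : ∀ (s : G) (n : N), V (s * n) = V s * π n)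
    (s : G) (n : N) : ρ (s * n) * (V (s * n))⁻¹ = ρ s * (V s)⁻¹ := by
  rw [map_mul, hVn, hext, mul_inv_rev]
  group

theorem mul_inv_twisted_cocycle_eq_one (ρ : G →* K) (V : G → K) (s t : G) :
    let ν : G → K := fun s => ρ s * (V s)⁻¹
    ν s * (V s * ν t * (V s)⁻¹) * (V s * V t * (V (s * t))⁻¹) * (ν (s * t))⁻¹ = 1 := by
  simp only [map_mul, mul_inv_rev]
  group

theorem SemiconjBy.commute_mul_inv {a b x y : K} (ha : SemiconjBy a x y)
    (hb : SemiconjBy b x y) : Commute (a * b⁻¹) y :=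
  ha.mul_left (SemiconjBy.inv_symm_left_iff.mpr hb)

end GroupIdentities

theorem Unitary.semiconjBy_of_mul_mul_star_eq {A : Type*} [Monoid A] [StarMul A]
    {u x y : unitary A} (h : (u : A) * x * star (u : A) = y) : SemiconjBy u x y := by
  apply Subtype.ext
  change (u : A) * x = y * u
  rw [← h, mul_assoc _ (star (u : A)), Unitary.star_mul_self_of_mem u.2, mul_one]

theorem stmt7_general {G : Type*} [Group G] (N : Subgroup G) (hN : N.Normal)
    {H : Type*} [NormedAddCommGroup H] [InnerProductSpace ℂ H] [CompleteSpace H]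
    (π : N →* unitary (H →L[ℂ] H)) (ρ : G →* unitary (H →L[ℂ] H))
    (hext : ∀ n : N, ρ (n : G) = π n)
    (V : G → unitary (H →L[ℂ] H))
    (hV : ∀ (s : G) (n : N),
      (V s : H →L[ℂ] H) * (π n : H →L[ℂ] H) * star (V s : H →L[ℂ] H)
        = (π ⟨s * n * s⁻¹, hN.conj_mem (n : G) n.2 s⟩ : H →L[ℂ] H))
    (hVn : ∀ (s : G) (n : N), V (s * (n : G)) = V s * π n) :
    ∀ ν : G → unitary (H →L[ℂ] H),
      (ν = fun s => ρ s * (V s)⁻¹) →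
      (∀ (s : G) (n : N), ν (s * (n : G)) = ν s) ∧
      (∀ (s : G) (n : N),
        (ν s : H →L[ℂ] H) * (π n : H →L[ℂ] H) = (π n : H →L[ℂ] H) * (ν s : H →L[ℂ] H)) ∧
      (∀ s t : G,
        ν s * (V s * ν t * (V s)⁻¹) * (V s * V t * (V (s * t))⁻¹) * (ν (s * t))⁻¹ = 1) := by
  rintro ν rfl
  refine ⟨mul_inv_map_mul_right_of_extends π ρ hext V hVn, fun s n => ?_,
    mul_inv_twisted_cocycle_eq_one ρ V⟩
  obtain ⟨m, rfl⟩ : ∃ m : N, ⟨s * m * s⁻¹, hN.conj_mem m m.2 s⟩ = n :=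
    ⟨⟨s⁻¹ * n * s, by simpa using hN.conj_mem n n.2 s⁻¹⟩, Subtype.ext (by group)⟩
  have hρ : SemiconjBy (ρ s) (π m) (π ⟨s * m * s⁻¹, hN.conj_mem m m.2 s⟩) := by
    rw [← hext, ← hext]
    exact (SemiconjBy.conj_mk s m).map ρ
  have hVs := Unitary.semiconjBy_of_mul_mul_star_eq (hV s m)
  exact congrArg Subtype.val (hρ.commute_mul_inv hVs).eq

/-- If `ρ` extends `π`, then `ν_s = ρ(s) V_s*` depends only on the coset `sN`, takes values
in the unitary group of the commutant `π(N)'`, and trivializes the twisted action `(α, σ)`. -/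
theorem stmt7 {G : Type*} [Group G] (N : Subgroup G) (hN : N.Normal)
    {H : Type*} [NormedAddCommGroup H] [InnerProductSpace ℂ H] [CompleteSpace H]
    (π : N →* unitary (H →L[ℂ] H)) (ρ : G →* unitary (H →L[ℂ] H))
    (hext : ∀ n : N, ρ (n : G) = π n)
    (V : G → unitary (H →L[ℂ] H))
    (hV : ∀ (s : G) (n : N),
      (V s : H →L[ℂ] H) * (π n : H →L[ℂ] H) * star (V s : H →L[ℂ] H)
        = (π ⟨s * n * s⁻¹, hN.conj_mem (n : G) n.2 s⟩ : H →L[ℂ] H))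
    (hVn : ∀ (s : G) (n : N), V (s * (n : G)) = V s * π n)
    (hVe : V 1 = 1) :
    ∀ ν : G → unitary (H →L[ℂ] H),
      (ν = fun s => ρ s * (V s)⁻¹) →
      (∀ (s : G) (n : N), ν (s * (n : G)) = ν s) ∧
      (∀ (s : G) (n : N),
        (ν s : H →L[ℂ] H) * (π n : H →L[ℂ] H) = (π n : H →L[ℂ] H) * (ν s : H →L[ℂ] H)) ∧
      (∀ s t : G,
        ν s * (V s * ν t * (V s)⁻¹) * (V s * V t * (V (s * t))⁻¹) * (ν (s * t))⁻¹ = 1) :=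
  stmt7_general N hN π ρ hext V hV hVn
end

section
/- Let G be a finite group, N a normal subgroup with G/N cyclic of order m, and π : N → U(H) a G-invariant irreducible unitary representation on a finite-dimensional complex Hilbert space H. Then π extends to a unitary representation of G on H. -/
/-!
Let `s` lift a generator of `G ⧸ N` and let `W` be a unitary implementing conjugation by `s`
on `π`. With `m` the order of `G ⧸ N`, the unitary `π(s^m)⁻¹ W^m` commutes with `π(N)`, hence
is a scalar of modulus one; rescaling `W` by an `m`-th root of it gives `W^m = π(s^m)`.
Then `(n, k) ↦ π n * W^k` is a homomorphism on `N ⋊ ℤ` vanishing on the kernel of the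
surjection `(n, k) ↦ n * s^k` onto `G`, so it descends to the required extension.
-/

section

variable {G M : Type*} [Group G] [Group M] {N : Subgroup G} [N.Normal] (π : N →* M)
  {s : G} {W : M}

theorem map_conjNormal_zpow (hconj : ∀ n, π (MulAut.conjNormal s n) = W * π n * W⁻¹)
    (k : ℤ) (n : N) : π (MulAut.conjNormal (s ^ k) n) = W ^ k * π n * (W ^ k)⁻¹ := by
  have hconj_inv (n : N) : π (MulAut.conjNormal s⁻¹ n) = W⁻¹ * π n * W := by
    have h := hconj (MulAut.conjNormal s⁻¹ n)
    rw [← MulAut.mul_apply, ← map_mul, mul_inv_cancel, map_one, MulAut.one_apply] at h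
    rw [h]; group
  induction k using Int.induction_on generalizing n with
  | zero => simp
  | succ k ih => rw [zpow_add_one, map_mul, MulAut.mul_apply, ih, hconj]; group
  | pred k ih => rw [zpow_sub_one, map_mul, MulAut.mul_apply, ih, hconj_inv]; group

theorem commute_inv_map_mul_zpow (hconj : ∀ n, π (MulAut.conjNormal s n) = W * π n * W⁻¹)
    {k : ℤ} (σ : N) (hσ : (σ : G) = s ^ k) (n : N) :
    Commute ((π σ)⁻¹ * W ^ k) (π n) := by
  have h : W ^ k * π n * (W ^ k)⁻¹ = π σ * π n * (π σ)⁻¹ := by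
    rw [← map_conjNormal_zpow π hconj, ← map_inv, ← map_mul, ← map_mul]
    congr 1
    ext
    simp only [MulAut.conjNormal_apply, hσ, Subgroup.coe_mul, Subgroup.coe_inv]
  rw [commute_iff_eq, mul_assoc, mul_inv_eq_iff_eq_mul.mp h]
  group

theorem zpow_eq_map_of_pow_orderOf_eq (σ : N) (hσ : (σ : G) = s ^ orderOf (s : G ⧸ N))
    (hW : W ^ orderOf (s : G ⧸ N) = π σ) (k : ℤ) (hk : s ^ k ∈ N) :
    W ^ k = π ⟨s ^ k, hk⟩ := by
  obtain ⟨j, rfl⟩ : (orderOf (s : G ⧸ N) : ℤ) ∣ k := by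
    rwa [orderOf_dvd_iff_zpow_eq_one, ← QuotientGroup.mk_zpow, QuotientGroup.eq_one_iff]
  rw [zpow_mul, zpow_natCast, hW, ← map_zpow]
  congr 1
  ext
  simp [hσ, zpow_mul]

theorem exists_monoidHom_extension (hgen : ∀ x : G ⧸ N, x ∈ Subgroup.zpowers (s : G ⧸ N))
    (hconj : ∀ n, π (MulAut.conjNormal s n) = W * π n * W⁻¹)
    (hpow : ∀ (k : ℤ) (hk : s ^ k ∈ N), W ^ k = π ⟨s ^ k, hk⟩) :
    ∃ ρ : G →* M, ∀ n : N, ρ n = π n := by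
  let φ : Multiplicative ℤ →* MulAut N := MulAut.conjNormal.comp (zpowersHom G s)
  let p : N ⋊[φ] Multiplicative ℤ →* G :=
    SemidirectProduct.lift N.subtype (zpowersHom G s) fun k => by
      ext n
      simp only [φ, MonoidHom.comp_apply, zpowersHom_apply, MulEquiv.coe_toMonoidHom,
        MulAut.conj_apply, MulAut.conjNormal_apply, Subgroup.coe_subtype]
  let q : N ⋊[φ] Multiplicative ℤ →* M :=
    SemidirectProduct.lift π (zpowersHom M W) fun k => by
      ext n
      simp only [φ, MonoidHom.comp_apply, zpowersHom_apply, MulEquiv.coe_toMonoidHom,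
        MulAut.conj_apply, map_conjNormal_zpow π hconj]
  have hp : Function.Surjective p := by
    intro g
    obtain ⟨k, hk⟩ := Subgroup.mem_zpowers_iff.mp (hgen g)
    have hn : g * (s ^ k)⁻¹ ∈ N := by
      rw [← QuotientGroup.eq_one_iff, QuotientGroup.mk_mul, QuotientGroup.mk_inv,
        QuotientGroup.mk_zpow, hk, mul_inv_cancel]
    exact ⟨⟨⟨_, hn⟩, Multiplicative.ofAdd k⟩, inv_mul_cancel_right g (s ^ k)⟩
  have hker : p.ker ≤ q.ker := by
    rintro ⟨n, k⟩ h
    have hsk : (n : G)⁻¹ = s ^ k.toAdd := inv_eq_of_mul_eq_one_right h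
    have hk : s ^ k.toAdd ∈ N := hsk ▸ N.inv_mem n.2
    change π n * W ^ k.toAdd = 1
    rw [hpow _ hk, ← map_mul, show n * ⟨_, hk⟩ = 1 from Subtype.ext h, map_one]
  refine ⟨p.liftOfSurjective hp ⟨q, hker⟩, fun n => ?_⟩
  simpa [p, q] using p.liftOfRightInverse_comp_apply _ _ ⟨q, hker⟩ (SemidirectProduct.inl n)

end

section

variable {A : Type*} [CStarAlgebra A]

theorem smul_one_mem_unitary {z : ℂ} (hz : ‖z‖ = 1) : z • (1 : A) ∈ unitary A := by
  refine Unitary.smul_mem_of_mem ?_ (one_mem _)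
  rw [Unitary.mem_iff_star_mul_self, Complex.star_def, Complex.conj_mul', hz]
  simp

theorem norm_eq_one_of_smul_one_mem_unitary [Nontrivial A] {c : ℂ}
    (hc : c • (1 : A) ∈ unitary A) : ‖c‖ = 1 := by
  simpa [norm_smul] using CStarRing.norm_of_mem_unitary hc

theorem exists_central_pow_eq_of_coe_eq_smul_one {T : unitary A} {c : ℂ}
    (hT : (T : A) = c • 1) {m : ℕ} (hm : m ≠ 0) :
    ∃ u : unitary A, (∀ v, Commute u v) ∧ u ^ m = T := by
  rcases subsingleton_or_nontrivial A with hA | hA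
  · exact ⟨1, Commute.one_left, Subsingleton.elim _ _⟩
  obtain ⟨z, hz⟩ := IsAlgClosed.exists_pow_nat_eq c (Nat.pos_of_ne_zero hm)
  have hc : ‖c‖ = 1 := norm_eq_one_of_smul_one_mem_unitary (hT ▸ T.2)
  have hz1 : ‖z‖ = 1 :=
    (pow_eq_one_iff_of_nonneg (norm_nonneg z) hm).mp (by rw [← norm_pow, hz, hc])
  refine ⟨⟨z • 1, smul_one_mem_unitary hz1⟩, fun v => Subtype.ext ?_, Subtype.ext ?_⟩
  · simp
  · simp [hT, smul_pow, hz]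

end

theorem stmt15_general {G : Type*} [Group G] [Finite G] (N : Subgroup G) (hN : N.Normal)
    (hcyc : IsCyclic (G ⧸ N))
    {H : Type*} [NormedAddCommGroup H] [InnerProductSpace ℂ H] [CompleteSpace H]
    (π : N →* unitary (H →L[ℂ] H))
    (hirr : ∀ T : H →L[ℂ] H,
      (∀ n : N, T * (π n : H →L[ℂ] H) = (π n : H →L[ℂ] H) * T) → ∃ c : ℂ, T = c • 1)
    (hinv : ∀ s : G, ∃ W : unitary (H →L[ℂ] H), ∀ n : N,
      (W : H →L[ℂ] H) * (π n : H →L[ℂ] H) * star (W : H →L[ℂ] H)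
        = (π ⟨s * n * s⁻¹, hN.conj_mem (n : G) n.2 s⟩ : H →L[ℂ] H)) :
    ∃ ρ : G →* unitary (H →L[ℂ] H), ∀ n : N, ρ (n : G) = π n := by
  obtain ⟨q, hq⟩ := hcyc.exists_generator
  obtain ⟨s, rfl⟩ := QuotientGroup.mk_surjective q
  obtain ⟨W₀, hW₀⟩ := hinv s
  have hconj₀ (n : N) : π (MulAut.conjNormal s n) = W₀ * π n * W₀⁻¹ := by
    have h : MulAut.conjNormal s n = ⟨s * n * s⁻¹, hN.conj_mem n n.2 s⟩ :=
      Subtype.ext (MulAut.conjNormal_apply s n)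
    ext1
    simpa [h, ← Unitary.star_eq_inv, Unitary.coe_star] using (hW₀ n).symm
  set m := orderOf (s : G ⧸ N)
  let σ : N := ⟨s ^ m, (QuotientGroup.eq_one_iff _).mp <| by
    rw [QuotientGroup.mk_pow, pow_orderOf_eq_one]⟩
  obtain ⟨c, hc⟩ := hirr _ fun n =>
    congrArg Subtype.val (commute_inv_map_mul_zpow π hconj₀ σ (zpow_natCast s m).symm n).eq
  obtain ⟨u, hu, hum⟩ :=
    exists_central_pow_eq_of_coe_eq_smul_one hc (orderOf_pos (s : G ⧸ N)).ne'
  have hconj (n : N) : π (MulAut.conjNormal s n) = (u⁻¹ * W₀) * π n * (u⁻¹ * W₀)⁻¹ := by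
    rw [hconj₀, mul_inv_rev, inv_inv, ← mul_assoc, ← (hu _).eq]
    group
  have hpow : (u⁻¹ * W₀) ^ m = π σ := by
    rw [(hu W₀).inv_left.mul_pow, inv_pow, ((hu (W₀ ^ m)).pow_left m).inv_left.eq, hum]
    group
  exact exists_monoidHom_extension π hq hconj (zpow_eq_map_of_pow_orderOf_eq π σ rfl hpow)

/-- Clifford's theorem for cyclic quotients: if `G/N` is finite cyclic, then every
`G`-invariant irreducible unitary representation of `N` on a finite-dimensional Hilbert
space extends to a unitary representation of `G`. -/
theorem stmt15 {G : Type*} [Group G] [Finite G] (N : Subgroup G) (hN : N.Normal)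
    (hcyc : IsCyclic (G ⧸ N))
    {H : Type*} [NormedAddCommGroup H] [InnerProductSpace ℂ H] [CompleteSpace H]
    [FiniteDimensional ℂ H]
    (π : N →* unitary (H →L[ℂ] H))
    (hirr : ∀ T : H →L[ℂ] H,
      (∀ n : N, T * (π n : H →L[ℂ] H) = (π n : H →L[ℂ] H) * T) → ∃ c : ℂ, T = c • 1)
    (hinv : ∀ s : G, ∃ W : unitary (H →L[ℂ] H), ∀ n : N,
      (W : H →L[ℂ] H) * (π n : H →L[ℂ] H) * star (W : H →L[ℂ] H)
        = (π ⟨s * n * s⁻¹, hN.conj_mem (n : G) n.2 s⟩ : H →L[ℂ] H)) :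
    ∃ ρ : G →* unitary (H →L[ℂ] H), ∀ n : N, ρ (n : G) = π n :=
  stmt15_general N hN hcyc π hirr hinv
end
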